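/- Suppose m ≥ 2 and N ≥ 2. For every j ∈ {0,…,m−2}, the fixed-point attempt probabilities satisfy the interleaving chain τ(j+1; 0) ≤ τ(j; 0) ≤ τ(j+1; 1) ≤ τ(j; 1); in particular the ranges of p_0 ↦ τ(j;p_0) for consecutive values of j overlap. -/

import Mathlib

open Finset

/-- `α_j(c) = (1-c) ∑_{i=j}^m 2^i c^{i-j} + 2^m c^{m-j}`. -/
noncomputable def alphaB (m j : ℕ) (c : ℝ) : ℝ :=
  (1 - c) * ∑ i ∈ Finset.Icc j m, (2 : ℝ) ^ i * c ^ (i - j) + (2 : ℝ) ^ m * c ^ (m - j)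

/-- `κ_0 = 2 / CW_min`. -/
noncomputable def kappa0 (CWmin : ℕ) : ℝ := 2 / (CWmin : ℝ)

/-- A reset distribution `q = (q_0, …, q_m)`. -/
def IsResetDist (m : ℕ) (q : Fin (m + 1) → ℝ) : Prop :=
  (∀ j, 0 ≤ q j) ∧ (∑ j, q j) = 1

/-- Conditional attempt probability `τ̂_c(q) = κ_0 / ∑_j q_j α_j(c)`. -/
noncomputable def tauHatC (m CWmin : ℕ) (q : Fin (m + 1) → ℝ) (c : ℝ) : ℝ :=
  kappa0 CWmin / ∑ j : Fin (m + 1), q j * alphaB m (j : ℕ) c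

/-- RandomReset(j; p₀) conditional attempt probability
`τ_c(j;p₀) = κ_0 / (p₀ α_j(c) + ((1-p₀)/(m-j)) ∑_{i=j+1}^m α_i(c))`. -/
noncomputable def tauRRC (m CWmin : ℕ) (j : ℕ) (p0 c : ℝ) : ℝ :=
  kappa0 CWmin /
    (p0 * alphaB m j c + ((1 - p0) / ((m : ℝ) - (j : ℝ))) * ∑ i ∈ Finset.Icc (j + 1) m, alphaB m i c)

/-- `τ ∈ [0,1]` is the fixed-point attempt probability `τ̂(q)` of the reset distribution `q`
for `N` nodes: `τ = τ̂_{1-(1-τ)^(N-1)}(q)`. -/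
def IsFixedPointQ (m CWmin N : ℕ) (q : Fin (m + 1) → ℝ) (τ : ℝ) : Prop :=
  τ ∈ Set.Icc (0 : ℝ) 1 ∧ τ = tauHatC m CWmin q (1 - (1 - τ) ^ (N - 1))

/-- `τ ∈ [0,1]` is the fixed-point attempt probability `τ(j;p₀)` of the RandomReset(j;p₀)
policy for `N` nodes: `τ = τ_{1-(1-τ)^(N-1)}(j;p₀)`. -/
def IsFixedPointRR (m CWmin N : ℕ) (j : ℕ) (p0 τ : ℝ) : Prop :=
  τ ∈ Set.Icc (0 : ℝ) 1 ∧ τ = tauRRC m CWmin j p0 (1 - (1 - τ) ^ (N - 1))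


/-!
Each of the four fixed points solves `τ * D (c τ) = κ₀` with `c τ = 1 - (1 - τ) ^ (N - 1)`,
the denominator `D` being the mean of `α_{j+2}, …, α_m`, the mean of `α_{j+1}, …, α_m`,
`α_{j+1}` and `α_j` respectively. For `c < 1` the sequence `i ↦ α_i(c)` is strictly increasing,
so these denominators strictly decrease in this order (dropping the smallest term raises a
mean). Since `D ≥ 0` and `D + D' ≥ 0` on `[0, 1]`, every map `τ ↦ τ * D (c τ)` is monotone,
and a larger denominator therefore gives a smaller fixed point. At `c = 1` all `α_i` equal
`2 ^ m`; this case is excluded because `κ₀ ≤ 1 < D` forces `τ < 1`.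
-/

section alphaB

variable {m j : ℕ} {c : ℝ}

lemma alphaB_self (m : ℕ) (c : ℝ) : alphaB m m c = 2 ^ m * (2 - c) := by
  simp [alphaB]; ring

lemma alphaB_of_lt (hj : j < m) (c : ℝ) :
    alphaB m j c = (1 - c) * 2 ^ j + c * alphaB m (j + 1) c := by
  have hsum : ∑ i ∈ Icc (j + 1) m, (2 : ℝ) ^ i * c ^ (i - j)
      = c * ∑ i ∈ Icc (j + 1) m, (2 : ℝ) ^ i * c ^ (i - (j + 1)) := by
    rw [mul_sum]
    refine sum_congr rfl fun i hi => ?_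
    rw [show i - j = i - (j + 1) + 1 by grind, pow_succ]; ring
  have hpow : c ^ (m - j) = c * c ^ (m - (j + 1)) := by
    rw [show m - j = m - (j + 1) + 1 by omega, pow_succ]; ring
  rw [alphaB, alphaB, ← insert_Icc_add_one_left_eq_Icc hj.le, sum_insert (by simp), hsum, hpow]
  simp; ring

lemma differentiable_alphaB (m j : ℕ) : Differentiable ℝ (alphaB m j) := by
  unfold alphaB; fun_prop

lemma deriv_alphaB_self (m : ℕ) (c : ℝ) : deriv (alphaB m m) c = -2 ^ m := by
  rw [funext (alphaB_self m)]
  simp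

lemma deriv_alphaB_of_lt (hj : j < m) (c : ℝ) :
    deriv (alphaB m j) c = -2 ^ j + alphaB m (j + 1) c + c * deriv (alphaB m (j + 1)) c := by
  rw [funext (alphaB_of_lt hj)]
  have hlin : HasDerivAt (fun x : ℝ => (1 - x) * 2 ^ j) (-2 ^ j) c := by
    simpa using ((hasDerivAt_id c).const_sub 1).mul_const ((2 : ℝ) ^ j)
  rw [(hlin.fun_add ((hasDerivAt_id' c).fun_mul
    ((differentiable_alphaB m (j + 1)).differentiableAt.hasDerivAt))).deriv]
  ring

lemma two_pow_le_alphaB (hj : j ≤ m) (hc : c ∈ Set.Icc 0 1) : 2 ^ j ≤ alphaB m j c := by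
  induction hj using Nat.decreasingInduction with
  | self => rw [alphaB_self]; nlinarith [hc.2, (pow_pos two_pos m : (0 : ℝ) < 2 ^ m)]
  | of_succ k hk ih =>
    rw [alphaB_of_lt hk, pow_succ] at *
    nlinarith [hc.1, hc.2, (pow_pos two_pos k : (0 : ℝ) < 2 ^ k)]

lemma alphaB_pos (hj : j ≤ m) (hc : c ∈ Set.Icc 0 1) : 0 < alphaB m j c :=
  (pow_pos two_pos j).trans_le (two_pow_le_alphaB hj hc)

lemma alphaB_add_deriv_nonneg (hj : j ≤ m) (hc : c ∈ Set.Icc 0 1) :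
    0 ≤ alphaB m j c + deriv (alphaB m j) c := by
  induction hj using Nat.decreasingInduction with
  | self =>
    rw [alphaB_self, deriv_alphaB_self]
    nlinarith [hc.2, (pow_pos two_pos m : (0 : ℝ) < 2 ^ m)]
  | of_succ k hk ih =>
    have hbound := two_pow_le_alphaB hk hc
    rw [alphaB_of_lt hk, deriv_alphaB_of_lt hk, pow_succ] at *
    nlinarith [hc.1, hc.2, (pow_pos two_pos k : (0 : ℝ) < 2 ^ k), mul_nonneg hc.1 ih]

lemma alphaB_lt_alphaB_succ (hj : j < m) (hc : c ∈ Set.Ico 0 1) :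
    alphaB m j c < alphaB m (j + 1) c := by
  have hbound := two_pow_le_alphaB hj (Set.Ico_subset_Icc_self hc)
  rw [alphaB_of_lt hj, pow_succ] at *
  nlinarith [hc.1, hc.2, (pow_pos two_pos j : (0 : ℝ) < 2 ^ j)]

lemma strictMonoOn_alphaB (hc : c ∈ Set.Ico 0 1) :
    StrictMonoOn (fun i => alphaB m i c) (Set.Iic m) :=
  strictMonoOn_Iic_of_lt_succ fun _ hi => alphaB_lt_alphaB_succ hi hc

end alphaB

def collisionProb (n : ℕ) (τ : ℝ) : ℝ := 1 - (1 - τ) ^ n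

section collisionProb

variable {n : ℕ} {τ : ℝ}

lemma collisionProb_mem_Icc (hτ : τ ∈ Set.Icc 0 1) : collisionProb n τ ∈ Set.Icc 0 1 := by
  have h0 : 0 ≤ (1 - τ) ^ n := pow_nonneg (sub_nonneg.mpr hτ.2) n
  have h1 : (1 - τ) ^ n ≤ 1 := pow_le_one₀ (sub_nonneg.mpr hτ.2) (by linarith [hτ.1])
  constructor <;> unfold collisionProb <;> linarith

lemma collisionProb_lt_one (hτ : τ < 1) : collisionProb n τ < 1 := by
  have := pow_pos (sub_pos.mpr hτ) n
  unfold collisionProb; linarith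

lemma hasDerivAt_collisionProb (n : ℕ) (τ : ℝ) :
    HasDerivAt (collisionProb n) (n * (1 - τ) ^ (n - 1)) τ := by
  unfold collisionProb
  simpa using (((hasDerivAt_id τ).const_sub 1).pow n).const_sub 1

/-- `n τ (1 - τ)^(n - 1)` is one term of the binomial expansion of `(τ + (1 - τ))^n = 1`. -/
lemma mul_deriv_collisionProb_le_one (hτ : τ ∈ Set.Icc 0 1) :
    τ * (n * (1 - τ) ^ (n - 1)) ≤ 1 := by
  rcases Nat.eq_zero_or_pos n with rfl | hn
  · simp
  have h1τ : 0 ≤ 1 - τ := sub_nonneg.mpr hτ.2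
  have hterm := single_le_sum (s := range (n + 1))
    (f := fun k => τ ^ k * (1 - τ) ^ (n - k) * n.choose k)
    (fun k _ => by have := hτ.1; positivity)
    (mem_range.mpr (by omega : 1 < n + 1))
  rw [← add_pow, add_sub_cancel, one_pow] at hterm
  simpa [mul_comm, mul_left_comm] using hterm

/-- The derivative of `τ ↦ τ D(c(τ))` is the convex combination `(1 - s) D + s (D + D')` with
weight `s = τ c'(τ) ∈ [0, 1]`. -/
lemma monotoneOn_mul_comp_collisionProb {D D' : ℝ → ℝ}
    (hD : ∀ c ∈ Set.Icc (0 : ℝ) 1, HasDerivAt D (D' c) c)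
    (hD_nonneg : ∀ c ∈ Set.Icc (0 : ℝ) 1, 0 ≤ D c)
    (hD_add_nonneg : ∀ c ∈ Set.Icc (0 : ℝ) 1, 0 ≤ D c + D' c) :
    MonotoneOn (fun τ => τ * D (collisionProb n τ)) (Set.Icc 0 1) := by
  have hderiv : ∀ τ ∈ Set.Icc (0 : ℝ) 1, HasDerivAt (fun τ => τ * D (collisionProb n τ))
      (D (collisionProb n τ) + τ * (D' (collisionProb n τ) * (n * (1 - τ) ^ (n - 1)))) τ := by
    intro τ hτ
    simpa using (hasDerivAt_id' τ).fun_mul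
      ((hD _ (collisionProb_mem_Icc hτ)).comp τ (hasDerivAt_collisionProb n τ))
  refine monotoneOn_of_deriv_nonneg (convex_Icc 0 1)
    (fun τ hτ => (hderiv τ hτ).continuousAt.continuousWithinAt)
    (fun τ hτ => (hderiv τ (interior_subset hτ)).differentiableAt.differentiableWithinAt)
    fun τ hτ => ?_
  have hτ' := interior_subset hτ
  rw [(hderiv τ hτ').deriv]
  have hc := collisionProb_mem_Icc (n := n) hτ'
  have hs_nonneg : 0 ≤ τ * (n * (1 - τ) ^ (n - 1)) :=
    mul_nonneg hτ'.1 (mul_nonneg n.cast_nonneg (pow_nonneg (sub_nonneg.mpr hτ'.2) _))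
  have hs_le := mul_deriv_collisionProb_le_one (n := n) hτ'
  nlinarith [mul_nonneg (sub_nonneg.mpr hs_le) (hD_nonneg _ hc),
    mul_nonneg hs_nonneg (hD_add_nonneg _ hc)]

lemma le_of_fixedPoint_of_lt {κ x y : ℝ} {Dsm Dlg : ℝ → ℝ}
    (hmono : MonotoneOn (fun τ => τ * Dsm (collisionProb n τ)) (Set.Icc 0 1))
    (hpos : ∀ c ∈ Set.Icc (0 : ℝ) 1, 0 < Dsm c)
    (hlt : ∀ c ∈ Set.Ico (0 : ℝ) 1, Dsm c < Dlg c)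
    (hκ : ∀ c ∈ Set.Icc (0 : ℝ) 1, κ < Dlg c)
    (hx : x ∈ Set.Icc 0 1) (hy : y ∈ Set.Icc 0 1)
    (hfx : x = κ / Dlg (collisionProb n x)) (hfy : y = κ / Dsm (collisionProb n y)) :
    x ≤ y := by
  by_contra! hyx
  have hx0 : 0 < x := hy.1.trans_lt hyx
  have hDx : Dlg (collisionProb n x) ≠ 0 := fun h => by rw [h, div_zero] at hfx; linarith
  have hx_mul : x * Dlg (collisionProb n x) = κ := (eq_div_iff hDx).mp hfx
  have hy_mul : y * Dsm (collisionProb n y) = κ :=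
    (eq_div_iff (hpos _ (collisionProb_mem_Icc hy)).ne').mp hfy
  have hx1 : x < 1 := hx.2.lt_of_ne fun h => by
    subst h
    linarith [hκ _ (collisionProb_mem_Icc (n := n) hx)]
  have hcx : collisionProb n x ∈ Set.Ico 0 1 :=
    ⟨(collisionProb_mem_Icc hx).1, collisionProb_lt_one hx1⟩
  exact lt_irrefl κ <| calc
    κ = y * Dsm (collisionProb n y) := hy_mul.symm
    _ ≤ x * Dsm (collisionProb n x) := hmono hy hx hyx.le
    _ < x * Dlg (collisionProb n x) := mul_lt_mul_of_pos_left (hlt _ hcx) hx0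
    _ = κ := hx_mul

end collisionProb

noncomputable def tailMean (m j : ℕ) (c : ℝ) : ℝ :=
  (∑ i ∈ Icc (j + 1) m, alphaB m i c) / ((m : ℝ) - j)

section tailMean

variable {m j : ℕ} {c : ℝ}

lemma tauRRC_zero (m CWmin j : ℕ) (c : ℝ) :
    tauRRC m CWmin j 0 c = kappa0 CWmin / tailMean m j c := by
  simp [tauRRC, tailMean, div_eq_inv_mul]

lemma tauRRC_one (m CWmin j : ℕ) (c : ℝ) :
    tauRRC m CWmin j 1 c = kappa0 CWmin / alphaB m j c := by
  simp [tauRRC]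

lemma two_pow_succ_le_tailMean (hj : j < m) (hc : c ∈ Set.Icc 0 1) :
    2 ^ (j + 1) ≤ tailMean m j c := by
  have hcard : ((Icc (j + 1) m).card : ℝ) = m - j := by
    rw [Nat.card_Icc, Nat.cast_sub (by omega)]; push_cast; ring
  have hsum := card_nsmul_le_sum (Icc (j + 1) m) (fun i => alphaB m i c) (2 ^ (j + 1))
    fun i hi => (pow_le_pow_right₀ one_le_two (mem_Icc.mp hi).1).trans
      (two_pow_le_alphaB (mem_Icc.mp hi).2 hc)
  rw [nsmul_eq_mul, hcard] at hsum
  rw [tailMean, le_div_iff₀ (by rw [sub_pos]; exact_mod_cast hj)]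
  linarith

lemma tailMean_pos (hj : j < m) (hc : c ∈ Set.Icc 0 1) : 0 < tailMean m j c :=
  (pow_pos two_pos _).trans_le (two_pow_succ_le_tailMean hj hc)

lemma sum_alphaB_Icc_succ (hj : j < m) (c : ℝ) :
    ∑ i ∈ Icc (j + 1) m, alphaB m i c
      = alphaB m (j + 1) c + ∑ i ∈ Icc (j + 2) m, alphaB m i c := by
  rw [← insert_Icc_add_one_left_eq_Icc (show j + 1 ≤ m by omega), sum_insert (by simp)]
  rfl

lemma mul_alphaB_lt_sum_alphaB (hj : j + 1 < m) (hc : c ∈ Set.Ico 0 1) :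
    ((m : ℝ) - (j + 1)) * alphaB m (j + 1) c < ∑ i ∈ Icc (j + 2) m, alphaB m i c := by
  have hlt := sum_lt_sum_of_nonempty (s := Icc (j + 2) m) (nonempty_Icc.mpr (by omega))
    (f := fun _ => alphaB m (j + 1) c) (g := fun i => alphaB m i c)
    fun i hi => strictMonoOn_alphaB hc (Set.mem_Iic.mpr (by omega))
      (Set.mem_Iic.mpr (mem_Icc.mp hi).2) (by grind)
  rw [sum_const, Nat.card_Icc, nsmul_eq_mul, Nat.cast_sub (by omega)] at hlt
  rwa [show ((m + 1 : ℕ) : ℝ) - (j + 2 : ℕ) = m - (j + 1) by push_cast; ring] at hlt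

lemma alphaB_succ_lt_tailMean (hj : j + 1 < m) (hc : c ∈ Set.Ico 0 1) :
    alphaB m (j + 1) c < tailMean m j c := by
  have hlt := mul_alphaB_lt_sum_alphaB hj hc
  have hmj : (0 : ℝ) < m - j := by rw [sub_pos]; exact_mod_cast (by omega : j < m)
  rw [tailMean, sum_alphaB_Icc_succ (by omega), lt_div_iff₀ hmj]
  linarith

lemma tailMean_lt_tailMean_succ (hj : j + 1 < m) (hc : c ∈ Set.Ico 0 1) :
    tailMean m j c < tailMean m (j + 1) c := by
  have hlt := mul_alphaB_lt_sum_alphaB hj hc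
  have hmj : (0 : ℝ) < m - (j + 1) := by rw [sub_pos]; exact_mod_cast hj
  rw [tailMean, tailMean, sum_alphaB_Icc_succ (by omega), Nat.cast_succ,
    div_lt_div_iff₀ (by linarith) hmj]
  linarith

lemma monotoneOn_mul_alphaB_comp_collisionProb (n : ℕ) (hj : j ≤ m) :
    MonotoneOn (fun τ => τ * alphaB m j (collisionProb n τ)) (Set.Icc 0 1) :=
  monotoneOn_mul_comp_collisionProb
    (fun c _ => (differentiable_alphaB m j c).hasDerivAt)
    (fun _ hc => (alphaB_pos hj hc).le) (fun _ hc => alphaB_add_deriv_nonneg hj hc)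

lemma monotoneOn_mul_tailMean_comp_collisionProb (n : ℕ) (hj : j ≤ m) :
    MonotoneOn (fun τ => τ * tailMean m j (collisionProb n τ)) (Set.Icc 0 1) := by
  have hmj : (0 : ℝ) ≤ m - j := by rw [sub_nonneg]; exact_mod_cast hj
  refine monotoneOn_mul_comp_collisionProb
    (D' := fun c => (∑ i ∈ Icc (j + 1) m, deriv (alphaB m i) c) / ((m : ℝ) - j))
    (fun c _ => (HasDerivAt.fun_sum fun i _ =>
      (differentiable_alphaB m i c).hasDerivAt).div_const _)
    (fun _ hc => div_nonneg (sum_nonneg fun i hi => (alphaB_pos (mem_Icc.mp hi).2 hc).le) hmj)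
    fun _ hc => ?_
  rw [tailMean, ← add_div, ← sum_add_distrib]
  exact div_nonneg (sum_nonneg fun i hi => alphaB_add_deriv_nonneg (mem_Icc.mp hi).2 hc) hmj

end tailMean

lemma kappa0_le_one {CWmin : ℕ} (hCW : 2 ≤ CWmin) : kappa0 CWmin ≤ 1 := by
  rw [kappa0, div_le_one (by positivity)]
  exact_mod_cast hCW

theorem fixedPointRR_interleaving_general (m CWmin N : ℕ) (hm : 2 ≤ m) (hCW : 2 ≤ CWmin)
    (j : ℕ) (hj : j ≤ m - 2)
    (a b d e : ℝ)
    (ha : IsFixedPointRR m CWmin N (j + 1) 0 a)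
    (hb : IsFixedPointRR m CWmin N j 0 b)
    (hd : IsFixedPointRR m CWmin N (j + 1) 1 d)
    (he : IsFixedPointRR m CWmin N j 1 e) :
    a ≤ b ∧ b ≤ d ∧ d ≤ e := by
  have hjm : j + 1 < m := by omega
  have hκ (k : ℕ) : kappa0 CWmin < 2 ^ (k + 1) :=
    (kappa0_le_one hCW).trans_lt (one_lt_pow₀ one_lt_two k.succ_ne_zero)
  refine ⟨?_, ?_, ?_⟩
  · exact le_of_fixedPoint_of_lt (monotoneOn_mul_tailMean_comp_collisionProb _ (by omega))
      (fun _ hc => tailMean_pos (by omega) hc) (fun _ hc => tailMean_lt_tailMean_succ hjm hc)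
      (fun _ hc => (hκ (j + 1)).trans_le (two_pow_succ_le_tailMean hjm hc))
      ha.1 hb.1 (ha.2.trans (tauRRC_zero ..)) (hb.2.trans (tauRRC_zero ..))
  · exact le_of_fixedPoint_of_lt (monotoneOn_mul_alphaB_comp_collisionProb _ hjm.le)
      (fun _ hc => alphaB_pos hjm.le hc) (fun _ hc => alphaB_succ_lt_tailMean hjm hc)
      (fun _ hc => (hκ j).trans_le (two_pow_succ_le_tailMean (by omega) hc))
      hb.1 hd.1 (hb.2.trans (tauRRC_zero ..)) (hd.2.trans (tauRRC_one ..))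
  · exact le_of_fixedPoint_of_lt (monotoneOn_mul_alphaB_comp_collisionProb _ (by omega))
      (fun _ hc => alphaB_pos (by omega) hc) (fun _ hc => alphaB_lt_alphaB_succ (by omega) hc)
      (fun _ hc => (hκ j).trans_le (two_pow_le_alphaB hjm.le hc))
      hd.1 he.1 (hd.2.trans (tauRRC_one ..)) (he.2.trans (tauRRC_one ..))

/-- For `m ≥ 2`, `N ≥ 2` and `j ∈ {0,…,m-2}`, the fixed-point attempt probabilities
interleave: `τ(j+1;0) ≤ τ(j;0) ≤ τ(j+1;1) ≤ τ(j;1)`, so the ranges of `p₀ ↦ τ(j;p₀)` for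
consecutive `j` overlap. -/
theorem fixedPointRR_interleaving (m CWmin N : ℕ) (hm : 2 ≤ m) (hCW : 2 ≤ CWmin) (hN : 2 ≤ N)
    (j : ℕ) (hj : j ≤ m - 2)
    (a b d e : ℝ)
    (ha : IsFixedPointRR m CWmin N (j + 1) 0 a)
    (hb : IsFixedPointRR m CWmin N j 0 b)
    (hd : IsFixedPointRR m CWmin N (j + 1) 1 d)
    (he : IsFixedPointRR m CWmin N j 1 e) :
    a ≤ b ∧ b ≤ d ∧ d ≤ e :=
  fixedPointRR_interleaving_general m CWmin N hm hCW j hj a b d e ha hb hd he
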